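/- Let X be a Hermitian operator in M_m ⊗ M_n with exactly two distinct eigenvalues λ_1 > λ_2, and let P⁻ be the orthogonal projection onto the λ_2-eigenspace. Then X is k-block positive if and only if ‖P⁻‖_{S(k)} ≤ λ_1 / (λ_1 − λ_2). -/

import Mathlib

open scoped BigOperators

noncomputable section

/-- Elementary tensor of two vectors. -/
def tens {m n : ℕ} (a : Fin m → ℂ) (b : Fin n → ℂ) : Fin m × Fin n → ℂ :=
  fun p => a p.1 * b p.2

/-- Inner product `⟨w|v⟩`, conjugate-linear in the first argument. -/
def ip {ι : Type} [Fintype ι] (w v : ι → ℂ) : ℂ :=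
  ∑ i, (starRingEnd ℂ) (w i) * v i

/-- Euclidean norm. -/
def nrm {ι : Type} [Fintype ι] (v : ι → ℂ) : ℝ :=
  Real.sqrt (∑ i, Complex.normSq (v i))

/-- Schmidt rank at most `k`: `v` is a sum of `k` elementary tensors. -/
def SRle {m n : ℕ} (k : ℕ) (v : Fin m × Fin n → ℂ) : Prop :=
  ∃ (a : Fin k → Fin m → ℂ) (b : Fin k → Fin n → ℂ),
    v = fun p => ∑ l, a l p.1 * b l p.2

/-- The `s(k)`-vector norm. -/
def snorm {m n : ℕ} (k : ℕ) (v : Fin m × Fin n → ℂ) : ℝ :=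
  sSup { r : ℝ | ∃ w : Fin m × Fin n → ℂ, nrm w = 1 ∧ SRle k w ∧ r = ‖ip w v‖ }

/-- The `S(k)`-operator norm. -/
def Snorm {m n : ℕ} (k : ℕ) (X : Matrix (Fin m × Fin n) (Fin m × Fin n) ℂ) : ℝ :=
  sSup { r : ℝ | ∃ v w : Fin m × Fin n → ℂ, nrm v = 1 ∧ nrm w = 1 ∧ SRle k v ∧ SRle k w ∧
    r = ‖ip w (X.mulVec v)‖ }

/-- `k`-block positivity: `⟨v|X|v⟩ ≥ 0` for all unit vectors of Schmidt rank at most `k`. -/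
def kBlockPos {m n : ℕ} (k : ℕ) (X : Matrix (Fin m × Fin n) (Fin m × Fin n) ℂ) : Prop :=
  ∀ v : Fin m × Fin n → ℂ, nrm v = 1 → SRle k v → 0 ≤ (ip v (X.mulVec v)).re


/-! Writing `X = λ₁ - (λ₁ - λ₂) P⁻`, a unit vector `v` has `⟨v|X|v⟩ = λ₁ - (λ₁ - λ₂) ‖P⁻v‖²`, so
`k`-block positivity says exactly that `‖P⁻v‖² ≤ λ₁ / (λ₁ - λ₂)` on unit vectors of Schmidt rank at
most `k`. Since `P⁻` is an orthogonal projection, `⟨w|P⁻v⟩ = ⟨P⁻w|P⁻v⟩`, and Cauchy–Schwarz with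
AM–GM shows that `‖P⁻‖_{S(k)}` is the supremum of the diagonal values `⟨v|P⁻v⟩ = ‖P⁻v‖²`. -/

open Matrix

section InnerProduct

variable {ι : Type} [Fintype ι]

lemma ip_eq_dotProduct (w v : ι → ℂ) : ip w v = star w ⬝ᵥ v := rfl

lemma ip_eq_inner (w v : ι → ℂ) : ip w v = inner ℂ (WithLp.toLp 2 w) (WithLp.toLp 2 v) := by
  simp only [ip, PiLp.inner_apply, RCLike.inner_apply]
  exact Finset.sum_congr rfl fun i _ => mul_comm _ _

lemma nrm_eq_norm (v : ι → ℂ) : nrm v = ‖WithLp.toLp 2 v‖ := by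
  simp [nrm, EuclideanSpace.norm_eq, Complex.sq_norm]

lemma nrm_nonneg (v : ι → ℂ) : 0 ≤ nrm v := Real.sqrt_nonneg _

lemma nrm_single [DecidableEq ι] (i : ι) : nrm (Pi.single i 1 : ι → ℂ) = 1 := by
  simp [nrm, Pi.single_apply, apply_ite Complex.normSq]

lemma norm_ip_le (w v : ι → ℂ) : ‖ip w v‖ ≤ nrm w * nrm v := by
  rw [ip_eq_inner, nrm_eq_norm, nrm_eq_norm]
  exact norm_inner_le_norm _ _

lemma ip_self (v : ι → ℂ) : ip v v = ((nrm v ^ 2 : ℝ) : ℂ) := by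
  rw [ip_eq_inner, nrm_eq_norm, inner_self_eq_norm_sq_to_K]
  push_cast
  rfl

variable {P : Matrix ι ι ℂ}

lemma ip_mulVec_of_isProj (hH : P.IsHermitian) (hI : P * P = P) (w v : ι → ℂ) :
    ip w (P *ᵥ v) = ip (P *ᵥ w) (P *ᵥ v) := by
  rw [ip_eq_dotProduct, ip_eq_dotProduct, star_mulVec, hH, ← dotProduct_mulVec,
    mulVec_mulVec, hI]

lemma ip_mulVec_self_of_isProj (hH : P.IsHermitian) (hI : P * P = P) (v : ι → ℂ) :
    ip v (P *ᵥ v) = ((nrm (P *ᵥ v) ^ 2 : ℝ) : ℂ) := by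
  rw [ip_mulVec_of_isProj hH hI, ip_self]

lemma norm_ip_mulVec_le_of_isProj (hH : P.IsHermitian) (hI : P * P = P) (w v : ι → ℂ) :
    ‖ip w (P *ᵥ v)‖ ≤ nrm (P *ᵥ w) * nrm (P *ᵥ v) := by
  rw [ip_mulVec_of_isProj hH hI]
  exact norm_ip_le _ _

lemma nrm_mulVec_le_of_isProj (hH : P.IsHermitian) (hI : P * P = P) (v : ι → ℂ) :
    nrm (P *ᵥ v) ≤ nrm v := by
  have hcs : nrm (P *ᵥ v) ^ 2 ≤ nrm v * nrm (P *ᵥ v) := by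
    simpa [ip_mulVec_self_of_isProj hH hI] using norm_ip_le v (P *ᵥ v)
  nlinarith [nrm_nonneg v, nrm_nonneg (P *ᵥ v)]

lemma re_ip_twoEigenvalue_mulVec [DecidableEq ι] (hH : P.IsHermitian) (hI : P * P = P)
    (lam1 lam2 : ℝ) (v : ι → ℂ) :
    (ip v (((lam1 : ℂ) • (1 - P) + (lam2 : ℂ) • P) *ᵥ v)).re =
      lam1 * nrm v ^ 2 - (lam1 - lam2) * nrm (P *ᵥ v) ^ 2 := by
  have hexp : ip v (((lam1 : ℂ) • (1 - P) + (lam2 : ℂ) • P) *ᵥ v) =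
      lam1 * ip v v - (lam1 - lam2 : ℂ) * ip v (P *ᵥ v) := by
    simp only [ip_eq_dotProduct, add_mulVec, smul_mulVec, sub_mulVec,
      one_mulVec, dotProduct_add, dotProduct_smul, dotProduct_sub, smul_eq_mul]
    ring
  rw [hexp, ip_self, ip_mulVec_self_of_isProj hH hI]
  norm_cast

end InnerProduct

section Bipartite

variable {m n k : ℕ}

lemma nrm_tens (a : Fin m → ℂ) (b : Fin n → ℂ) : nrm (tens a b) = nrm a * nrm b := by
  simp only [nrm, tens, map_mul, Fintype.sum_prod_type, ← Finset.mul_sum, ← Finset.sum_mul]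
  rw [← Real.sqrt_mul (Finset.sum_nonneg fun i _ => Complex.normSq_nonneg _)]

lemma SRle_tens (hk : 1 ≤ k) (a : Fin m → ℂ) (b : Fin n → ℂ) : SRle k (tens a b) := by
  refine ⟨fun l i => if l = ⟨0, hk⟩ then a i else 0, fun _ => b, ?_⟩
  ext p
  simp [tens, ite_mul]

lemma exists_nrm_eq_one_SRle (hk : 1 ≤ k) (p : Fin m × Fin n) :
    ∃ v : Fin m × Fin n → ℂ, nrm v = 1 ∧ SRle k v :=
  ⟨tens (Pi.single p.1 1) (Pi.single p.2 1), by rw [nrm_tens, nrm_single, nrm_single, one_mul],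
    SRle_tens hk _ _⟩

variable {P : Matrix (Fin m × Fin n) (Fin m × Fin n) ℂ}

lemma kBlockPos_twoEigenvalue_iff (hH : P.IsHermitian) (hI : P * P = P) {lam1 lam2 : ℝ}
    (hlam : lam2 < lam1) :
    kBlockPos k ((lam1 : ℂ) • (1 - P) + (lam2 : ℂ) • P) ↔
      ∀ v, nrm v = 1 → SRle k v → nrm (P *ᵥ v) ^ 2 ≤ lam1 / (lam1 - lam2) := by
  refine forall₃_congr fun v hv _ => ?_
  rw [re_ip_twoEigenvalue_mulVec hH hI, hv, le_div_iff₀ (sub_pos.mpr hlam)]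
  constructor <;> intro h <;> linarith

lemma Snorm_le_iff_of_isProj (hH : P.IsHermitian) (hI : P * P = P)
    (hex : ∃ v : Fin m × Fin n → ℂ, nrm v = 1 ∧ SRle k v) (c : ℝ) :
    Snorm k P ≤ c ↔ ∀ v, nrm v = 1 → SRle k v → nrm (P *ᵥ v) ^ 2 ≤ c := by
  unfold Snorm
  constructor
  · intro hS v hv hsv
    have hdiag : ‖ip v (P *ᵥ v)‖ = nrm (P *ᵥ v) ^ 2 := by
      rw [ip_mulVec_self_of_isProj hH hI, Complex.norm_of_nonneg (sq_nonneg _)]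
    rw [← hdiag]
    refine le_trans ?_ hS
    refine le_csSup ⟨1, ?_⟩ ⟨v, v, hv, hv, hsv, hsv, rfl⟩
    rintro _ ⟨v', w', hv', hw', -, -, rfl⟩
    calc ‖ip w' (P *ᵥ v')‖ ≤ nrm (P *ᵥ w') * nrm (P *ᵥ v') :=
          norm_ip_mulVec_le_of_isProj hH hI w' v'
      _ ≤ nrm w' * nrm v' := mul_le_mul (nrm_mulVec_le_of_isProj hH hI w')
          (nrm_mulVec_le_of_isProj hH hI v') (nrm_nonneg _) (nrm_nonneg _)
      _ = 1 := by rw [hv', hw', one_mul]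
  · intro hD
    obtain ⟨v₀, hv₀, hs₀⟩ := hex
    refine csSup_le ⟨_, v₀, v₀, hv₀, hv₀, hs₀, hs₀, rfl⟩ ?_
    rintro _ ⟨v, w, hv, hw, hsv, hsw, rfl⟩
    -- |⟨Pw|Pv⟩| ≤ ‖Pw‖ ‖Pv‖ ≤ (‖Pw‖² + ‖Pv‖²) / 2
    nlinarith [norm_ip_mulVec_le_of_isProj hH hI w v, hD v hv hsv, hD w hw hsw,
      sq_nonneg (nrm (P *ᵥ w) - nrm (P *ᵥ v))]

end Bipartite

theorem two_eigenvalue_kBlockPos_iff_general (m n k : ℕ) (hk : 1 ≤ k) (lam1 lam2 : ℝ)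
    (hlam : lam2 < lam1)
    (Pminus : Matrix (Fin m × Fin n) (Fin m × Fin n) ℂ)
    (hPherm : Pminus.IsHermitian) (hPidem : Pminus * Pminus = Pminus)
    (hP0 : Pminus ≠ 0) :
    kBlockPos k ((lam1 : ℂ) • ((1 : Matrix (Fin m × Fin n) (Fin m × Fin n) ℂ) - Pminus) +
        (lam2 : ℂ) • Pminus) ↔
      Snorm k Pminus ≤ lam1 / (lam1 - lam2) := by
  obtain ⟨p⟩ : Nonempty (Fin m × Fin n) := by
    by_contra hempty
    have : IsEmpty (Fin m × Fin n) := not_nonempty_iff.mp hempty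
    exact hP0 (Subsingleton.elim _ _)
  rw [kBlockPos_twoEigenvalue_iff hPherm hPidem hlam,
    Snorm_le_iff_of_isProj hPherm hPidem (exists_nrm_eq_one_SRle hk p)]

/-- Let `X = λ₁·P⁺ + λ₂·P⁻` be a Hermitian operator in `M_m ⊗ M_n` with
exactly two distinct eigenvalues `λ₁ > λ₂`, where `P⁻` is the orthogonal projection onto the
`λ₂`-eigenspace (and `P⁺ = 1 − P⁻`).  Then `X` is `k`-block positive if and only if
`‖P⁻‖_{S(k)} ≤ λ₁ / (λ₁ − λ₂)`. -/
theorem two_eigenvalue_kBlockPos_iff (m n k : ℕ) (hk : 1 ≤ k) (lam1 lam2 : ℝ)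
    (hlam : lam2 < lam1)
    (Pminus : Matrix (Fin m × Fin n) (Fin m × Fin n) ℂ)
    (hPherm : Pminus.IsHermitian) (hPidem : Pminus * Pminus = Pminus)
    (hP0 : Pminus ≠ 0) (hP1 : Pminus ≠ 1) :
    kBlockPos k ((lam1 : ℂ) • ((1 : Matrix (Fin m × Fin n) (Fin m × Fin n) ℂ) - Pminus) +
        (lam2 : ℂ) • Pminus) ↔
      Snorm k Pminus ≤ lam1 / (lam1 - lam2) :=
  two_eigenvalue_kBlockPos_iff_general m n k hk lam1 lam2 hlam Pminus hPherm hPidem hP0
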